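/- Let 𝔪 be a nonzero multisegment with leading index set I* and suppose min 𝔪 < min 𝔩(𝔪). For i ∈ I*, let i♯ ∈ I be an index with b(Δ_{i♯}) = b(Δ_i), 𝔡_𝔪(i♯) = 𝔡_𝔪(i), and e(Δ_{i♯}) minimal among such. Then no i♯ lies in the ladder index set Î of the Knuth step; in particular I* ∩ Î = ∅. -/

import Mathlib

/-- A segment `[a,b]` of integers with `a ≤ b`. -/
structure Segment where
  a : ℤ
  b : ℤ
  hle : a ≤ b

namespace Segment

/-- `s ≪ t` iff both the begin and end points of `s` are strictly smaller. -/
def ll (s t : Segment) : Prop := s.a < t.a ∧ s.b < t.b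

/-- Containment of segments: `s ⊆ t`. -/
def sub (s t : Segment) : Prop := t.a ≤ s.a ∧ s.b ≤ t.b

/-- Strict containment of segments: `s ⊊ t`. -/
def ssub (s t : Segment) : Prop := sub s t ∧ s ≠ t

end Segment

/-- There is a `≪`-ascending chain of length `j` in the family `Δ` starting at index `i`. -/
def ChainFrom {I : Type*} (Δ : I → Segment) (i : I) (j : ℕ) : Prop :=
  ∃ f : Fin (j + 1) → I, f 0 = i ∧
    ∀ r : Fin j, Segment.ll (Δ (f r.castSucc)) (Δ (f r.succ))

/-- `d` is the depth function of the multisegment `Δ`: `d i` is the maximal length of a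
`≪`-ascending chain starting at `Δ i`. -/
def IsDepth {I : Type*} (Δ : I → Segment) (d : I → ℕ) : Prop :=
  ∀ i, IsGreatest {j | ChainFrom Δ i j} (d i)

/-- The data of one step of the Knuth (RSK row-extraction) algorithm on a multisegment
`Δ : I → Segment`: the depth function `d`, admissible enumerations `L k` of the depth fibers
(containment-decreasing lists), the permutation `σ` cycling each fiber, and the segments
`Δ' i = [b(Δ i), e(Δ (σ i))]`. -/
structure KnuthData (I : Type*) where
  Δ : I → Segment
  d : I → ℕ
  σ : Equiv.Perm I
  L : ℕ → List I
  Δ' : I → Segment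
  hd : IsDepth Δ d
  hnodup : ∀ k, (L k).Nodup
  hmem : ∀ k i, i ∈ L k ↔ d i = k
  hchain : ∀ k, (L k).Chain' fun p q => Segment.sub (Δ q) (Δ p)
  hσ : ∀ (k : ℕ) (n : ℕ) (hn : n < (L k).length),
    σ ((L k).get ⟨n, hn⟩) =
      (L k).get ⟨(n + 1) % (L k).length,
        Nat.mod_lt _ (Nat.lt_of_le_of_lt (Nat.zero_le n) hn)⟩
  hΔ'a : ∀ i, (Δ' i).a = (Δ i).a
  hΔ'b : ∀ i, (Δ' i).b = (Δ (σ i)).b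

/-- `i` belongs to the ladder index set `Î`: it is the last index of the admissible enumeration
of its depth fiber.  The highest ladder `𝔩(𝔪)` consists of the segments `Δ' i`, `i ∈ Î`, and the
derived multisegment `𝔪'` of the segments `Δ' i`, `i ∉ Î`. -/
def IhatP {I : Type*} (K : KnuthData I) (i : I) : Prop :=
  (K.L (K.d i)).getLast? = some i

/-- The data of the Mœglin–Waldspurger step on a multisegment `Δ : I → Segment`:
`m0 = min 𝔪` and the list `Ls` of leading indices `i₁, …, i_k` (so `I* = {i ∈ Ls}`). -/
structure MWData (I : Type*) where
  Δ : I → Segment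
  m0 : ℤ
  hm0 : IsLeast {x | ∃ i, (Δ i).a = x} m0
  Ls : List I
  hne : Ls ≠ []
  hnodup : Ls.Nodup
  hhead : (Δ (Ls.head hne)).a = m0 ∧
    ∀ i, (Δ i).a = m0 → (Δ (Ls.head hne)).b ≤ (Δ i).b
  hchain : Ls.Chain' fun p q =>
    Segment.ll (Δ p) (Δ q) ∧ (Δ q).a = (Δ p).a + 1 ∧
      ∀ i, Segment.ll (Δ p) (Δ i) → (Δ i).a = (Δ p).a + 1 → (Δ q).b ≤ (Δ i).b
  hlast : ¬ ∃ i, Segment.ll (Δ (Ls.getLast hne)) (Δ i) ∧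
    (Δ i).a = (Δ (Ls.getLast hne)).a + 1

/-- `Δs` is the family of segments of `𝔪† = Σ Δ*_i`, where `Δ*_i = ⁻Δ_i = [b(Δ_i)+1, e(Δ_i)]`
for leading indices `i ∈ I*` and `Δ*_i = Δ_i` otherwise. -/
def IsMWDagger {I : Type*} (M : MWData I) (Δs : I → Segment) : Prop :=
  (∀ i ∈ M.Ls, (Δs i).a = (M.Δ i).a + 1 ∧ (Δs i).b = (M.Δ i).b) ∧
  ∀ i ∉ M.Ls, Δs i = M.Δ i

/-- A multisegment is non-degenerate if no segment equals `[min 𝔪, min 𝔪]`. -/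
def NonDeg {I : Type*} (Δ : I → Segment) (m0 : ℤ) : Prop :=
  ∀ i, ¬ ((Δ i).a = m0 ∧ (Δ i).b = m0)

section Aux

variable {I : Type*}

private lemma aux_depth_step (K : KnuthData I) {p q : I}
    (h : Segment.ll (K.Δ p) (K.Δ q)) : K.d q + 1 ≤ K.d p := by
  obtain ⟨f, hf0, hfs⟩ := (K.hd q).1
  refine (K.hd p).2 ⟨Fin.cons p f, Fin.cons_zero _ _, ?_⟩
  intro r
  refine Fin.cases ?_ ?_ r
  · simp only [Fin.castSucc_zero, Fin.cons_zero, Fin.cons_succ, hf0]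
    exact h
  · intro u
    simp only [← Fin.succ_castSucc, Fin.cons_succ]
    exact hfs u

private lemma aux_step_down (K : KnuthData I) {q : I} {m : ℕ} (h : K.d q = m + 1) :
    ∃ r, Segment.ll (K.Δ q) (K.Δ r) ∧ K.d r = m := by
  have hc := (K.hd q).1
  rw [h] at hc
  obtain ⟨f, hf0, hfs⟩ := hc
  refine ⟨f 1, by simpa [hf0] using hfs 0, le_antisymm ?_ ?_⟩
  · have := aux_depth_step K (p := q) (q := f 1) (by simpa [hf0] using hfs 0)
    omega
  · refine (K.hd (f 1)).2 ⟨fun u => f u.succ, by norm_num, ?_⟩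
    intro u
    simpa [← Fin.succ_castSucc] using hfs u.succ

private lemma aux_descend (K : KnuthData I) :
    ∀ (n k : ℕ) (q : I), K.d q = k + n →
      ∃ r, K.d r = k ∧ (K.Δ q).a + n ≤ (K.Δ r).a := by
  intro n
  induction n with
  | zero => exact fun k q h => ⟨q, by simpa using h, by simp⟩
  | succ n ih =>
    intro k q h
    obtain ⟨r1, hll, hr1⟩ := aux_step_down K (q := q) (m := k + n) (by omega)
    obtain ⟨r, hr, hle⟩ := ih k r1 hr1
    refine ⟨r, hr, ?_⟩
    have := hll.1
    omega

private lemma aux_last_max (K : KnuthData I) {k : ℕ} {j x : I}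
    (hj : (K.L k).getLast? = some j) (hx : x ∈ K.L k) :
    (K.Δ x).a ≤ (K.Δ j).a := by
  have hne : K.L k ≠ [] := by
    intro h; rw [h] at hj; simp at hj
  have hjl : j = (K.L k).getLast hne := by
    rw [List.getLast?_eq_getLast hne] at hj
    exact (Option.some_injective _ hj).symm
  letI : IsTrans I (fun p q => Segment.sub (K.Δ q) (K.Δ p)) :=
    ⟨fun a b c h1 h2 => ⟨h1.1.trans h2.1, h2.2.trans h1.2⟩⟩
  have hp := List.isChain_iff_pairwise.mp (K.hchain k)
  obtain ⟨⟨n, hn⟩, rfl⟩ := List.mem_iff_get.mp hx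
  have hlast : (K.L k).getLast hne = (K.L k).get ⟨(K.L k).length - 1, by omega⟩ :=
    by rw [List.get_eq_getElem]; exact List.getLast_eq_getElem hne
  rcases eq_or_lt_of_le (show n ≤ (K.L k).length - 1 by omega) with heq | hlt
  · subst hjl
    rw [hlast]
    simp [heq]
  · have := List.pairwise_iff_get.mp hp ⟨n, hn⟩ ⟨(K.L k).length - 1, by omega⟩ hlt
    rw [hjl, hlast]
    exact this.1

private lemma aux_key {I : Type*} (K : KnuthData I) (M : MWData I) (hsame : M.Δ = K.Δ)
    (ml : ℤ) (hml : IsLeast {x | ∃ i, IhatP K i ∧ (K.Δ' i).a = x} ml)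
    (hlt : M.m0 < ml) :
    ∀ i ∈ M.Ls, ∀ j, (K.Δ j).a = (K.Δ i).a → K.d j = K.d i → ¬ IhatP K j := by
  have h0 : 0 < M.Ls.length := by
    cases h : M.Ls with
    | nil => exact absurd h M.hne
    | cons a l => simp
  have hhd : M.Ls.head M.hne = M.Ls.get ⟨0, h0⟩ := by
    simp [List.head_eq_getElem]
  have hch := List.isChain_iff_getElem.mp M.hchain
  -- position lemma along the MW chain
  have hC : ∀ t (ht : t < M.Ls.length),
      (K.Δ (M.Ls.get ⟨t, ht⟩)).a = M.m0 + t ∧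
        K.d (M.Ls.get ⟨t, ht⟩) + t ≤ K.d (M.Ls.get ⟨0, h0⟩) := by
    intro t
    induction t with
    | zero =>
      intro ht
      have := M.hhead.1
      rw [hhd, hsame] at this
      exact ⟨by simpa using this, by omega⟩
    | succ t ih =>
      intro ht
      have ht' : t < M.Ls.length := by omega
      obtain ⟨ha, hdep⟩ := ih ht'
      simp only [List.get_eq_getElem] at ha hdep ⊢
      have hstep := hch t (by omega)
      rw [hsame] at hstep
      have hds := aux_depth_step K hstep.1
      refine ⟨?_, by omega⟩
      rw [hstep.2.1, ha]
      push_cast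
      ring
  intro i hi j haj hdj hI
  obtain ⟨⟨t, ht⟩, rfl⟩ := List.mem_iff_get.mp hi
  obtain ⟨hai, hdi⟩ := hC t ht
  set h := M.Ls.get ⟨0, h0⟩ with hh
  set m := K.d h with hm
  set k := K.d (M.Ls.get ⟨t, ht⟩) with hk
  -- w : last element of fiber m, lies in Î
  have hhm : h ∈ K.L m := (K.hmem m h).mpr rfl
  have hnem : K.L m ≠ [] := fun hnil => by rw [hnil] at hhm; simp at hhm
  set w := (K.L m).getLast hnem with hw
  have hwm : w ∈ K.L m := List.getLast_mem hnem
  have hdw : K.d w = m := (K.hmem m w).mp hwm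
  have hIw : IhatP K w := by
    unfold IhatP
    rw [hdw]
    exact List.getLast?_eq_getLast hnem
  have hmlw : ml ≤ (K.Δ w).a := hml.2 ⟨w, hIw, K.hΔ'a w⟩
  -- descend from w to depth k
  obtain ⟨r, hdr, hler⟩ := aux_descend K (m - k) k w (by omega)
  -- j is the last element of fiber k
  have hIj : (K.L k).getLast? = some j := by
    have := hI
    unfold IhatP at this
    rwa [hdj] at this
  have hrk : r ∈ K.L k := (K.hmem k r).mpr hdr
  have hrle : (K.Δ r).a ≤ (K.Δ j).a := aux_last_max K hIj hrk
  rw [haj, hai] at hrle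
  have hmk : k + t ≤ m := hdi
  have : ((m - k : ℕ) : ℤ) = (m : ℤ) - (k : ℤ) := by
    push_cast
    omega
  omega

end Aux

/-- If `min 𝔪 < min 𝔩(𝔪)` then for each leading index `i ∈ I*` the index `i♯` (same begin
point, same depth, minimal end point among such) does not lie in the ladder index set `Î`;
in particular `I* ∩ Î = ∅`. -/
theorem sharp_not_in_ladder {I : Type*} [Fintype I]
    (K : KnuthData I) (M : MWData I) (hsame : M.Δ = K.Δ)
    (ml : ℤ) (hml : IsLeast {x | ∃ i, IhatP K i ∧ (K.Δ' i).a = x} ml)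
    (hlt : M.m0 < ml) :
    (∀ i ∈ M.Ls, ∀ j, (K.Δ j).a = (K.Δ i).a → K.d j = K.d i →
        (∀ j', (K.Δ j').a = (K.Δ i).a → K.d j' = K.d i → (K.Δ j).b ≤ (K.Δ j').b) →
        ¬ IhatP K j) ∧
      ∀ i ∈ M.Ls, ¬ IhatP K i := by
  refine ⟨fun i hi j ha hd _ => aux_key K M hsame ml hml hlt i hi j ha hd,
    fun i hi => aux_key K M hsame ml hml hlt i hi i rfl rfl⟩
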